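/- Algebraic energy identity for the SSAV step with general auxiliary vector (the computation proving Theorem 3.1): if (v△, u△, ρ△) ∈ E × E × ℝ satisfies v△ = v − α h (u + u△) − h (ρ△ + ρ) Q, u△ = u + (h/2)(v△ + v), ρ△ = ρ + (h/2) ⟨Q, v△ + v⟩ for an arbitrary vector Q ∈ E, then (1/2)⟨v△ + v, v△ − v⟩ + α ⟨u△ + u, u△ − u⟩ = ρ² − (ρ△)², and consequently (1/2)‖v△‖² + α‖u△‖² + (ρ△)² = (1/2)‖v‖² + α‖u‖² + ρ². -/

import Mathlib

/-!
Take the inner product of the `v`-equation with `(vd + v) / 2` and of the `u`-equation with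
`α (ud + u)`: the two cross terms `± (α h / 2) ⟪vd + v, u + ud⟫` cancel, and the remaining
`Q`-term equals `-(ρd + ρ) (ρd - ρ)` by the `ρ`-equation. The identity
`⟪x + y, x - y⟫ = ‖x‖² - ‖y‖²` turns this into conservation of the modified energy.
-/

open RealInnerProductSpace

section

variable {F : Type*} [NormedAddCommGroup F] [InnerProductSpace ℝ F]

theorem real_inner_add_sub_eq_norm_sq_sub_norm_sq (x y : F) :
    ⟪x + y, x - y⟫ = ‖x‖ ^ 2 - ‖y‖ ^ 2 := by
  rw [inner_add_left, inner_sub_right, inner_sub_right, real_inner_self_eq_norm_sq,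
    real_inner_self_eq_norm_sq, real_inner_comm x y]
  ring

variable {α h ρ ρd : ℝ} {v u Q vd ud : F}

theorem ssav_step_inner_identity
    (h1 : vd = v - (α * h) • (u + ud) - (h * (ρd + ρ)) • Q)
    (h2 : ud = u + (h / 2) • (vd + v))
    (h3 : ρd = ρ + (h / 2) * ⟪Q, vd + v⟫) :
    (1 / 2) * ⟪vd + v, vd - v⟫ + α * ⟪ud + u, ud - u⟫ = ρ ^ 2 - ρd ^ 2 := by
  have hv : vd - v = -((α * h) • (u + ud) + (h * (ρd + ρ)) • Q) := by
    rw [h1]; module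
  have hu : ud - u = (h / 2) • (vd + v) := by
    rw [h2]; abel
  rw [hv, hu, inner_neg_right, inner_add_right, real_inner_smul_right, real_inner_smul_right,
    real_inner_smul_right, real_inner_comm Q, add_comm ud u, real_inner_comm (u + ud)]
  linear_combination (ρd + ρ) * h3

theorem ssav_step_energy_eq
    (h1 : vd = v - (α * h) • (u + ud) - (h * (ρd + ρ)) • Q)
    (h2 : ud = u + (h / 2) • (vd + v))
    (h3 : ρd = ρ + (h / 2) * ⟪Q, vd + v⟫) :
    (1 / 2) * ‖vd‖ ^ 2 + α * ‖ud‖ ^ 2 + ρd ^ 2 = (1 / 2) * ‖v‖ ^ 2 + α * ‖u‖ ^ 2 + ρ ^ 2 := by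
  have key := ssav_step_inner_identity h1 h2 h3
  rw [real_inner_add_sub_eq_norm_sq_sub_norm_sq, real_inner_add_sub_eq_norm_sq_sub_norm_sq] at key
  linarith

end

theorem ssav_algebraic_energy_identity_general {m : ℕ} (α h : ℝ)
    (v u Q : EuclideanSpace ℝ (Fin m)) (ρ : ℝ)
    (vd ud : EuclideanSpace ℝ (Fin m)) (ρd : ℝ)
    (h1 : vd = v - (α * h) • (u + ud) - (h * (ρd + ρ)) • Q)
    (h2 : ud = u + (h / 2) • (vd + v))
    (h3 : ρd = ρ + (h / 2) * ⟪Q, vd + v⟫) :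
    (1 / 2) * ⟪vd + v, vd - v⟫ + α * ⟪ud + u, ud - u⟫ = ρ ^ 2 - ρd ^ 2 ∧
    (1 / 2) * ‖vd‖ ^ 2 + α * ‖ud‖ ^ 2 + ρd ^ 2
      = (1 / 2) * ‖v‖ ^ 2 + α * ‖u‖ ^ 2 + ρ ^ 2 :=
  ⟨ssav_step_inner_identity h1 h2 h3, ssav_step_energy_eq h1 h2 h3⟩

/-- Algebraic energy identity for the SSAV step with a general auxiliary vector
(the computation proving Theorem 3.1). -/
theorem ssav_algebraic_energy_identity {m : ℕ} (α h : ℝ)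
    (hα : 0 < α) (hh0 : 0 < h) (hh1 : h ≤ 1)
    (v u Q : EuclideanSpace ℝ (Fin m)) (ρ : ℝ)
    (vd ud : EuclideanSpace ℝ (Fin m)) (ρd : ℝ)
    (h1 : vd = v - (α * h) • (u + ud) - (h * (ρd + ρ)) • Q)
    (h2 : ud = u + (h / 2) • (vd + v))
    (h3 : ρd = ρ + (h / 2) * ⟪Q, vd + v⟫) :
    (1 / 2) * ⟪vd + v, vd - v⟫ + α * ⟪ud + u, ud - u⟫ = ρ ^ 2 - ρd ^ 2 ∧
    (1 / 2) * ‖vd‖ ^ 2 + α * ‖ud‖ ^ 2 + ρd ^ 2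
      = (1 / 2) * ‖v‖ ^ 2 + α * ‖u‖ ^ 2 + ρ ^ 2 :=
  ssav_algebraic_energy_identity_general α h v u Q ρ vd ud ρd h1 h2 h3
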